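/- Let K > 0 and δ ∈ (0,1), and let (a_n)_{n∈ℕ} be a sequence of nonnegative reals satisfying a_{n+1} ≤ K·a_n·Σ_{i=0}^{n} a_i for all n ≥ 0. If K·a₀ < 1 and (K·a₀)^{1−δ}/(1 − (K·a₀)^δ) ≤ 1, then for all n ∈ ℕ one has K·a_n ≤ (K·a₀)^{1+nδ}. -/
import Mathlib


/-- The inductive estimate in the Picard-adapted sequence lemma:
`K * aₙ ≤ (K * a₀)^(1 + n δ)`. -/
theorem picard_sequence_pow_bound (K δ : ℝ) (hK : 0 < K) (hδ : δ ∈ Set.Ioo (0:ℝ) 1)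
    (a : ℕ → ℝ) (ha : ∀ n, 0 ≤ a n)
    (hrec : ∀ n : ℕ, a (n + 1) ≤ K * a n * ∑ i ∈ Finset.range (n + 1), a i)
    (h1 : K * a 0 < 1)
    (h2 : (K * a 0) ^ ((1:ℝ) - δ) / (1 - (K * a 0) ^ δ) ≤ 1) :
    ∀ n : ℕ, K * a n ≤ (K * a 0) ^ ((1:ℝ) + (n : ℝ) * δ) := by
  obtain ⟨hδ0, hδ1⟩ := hδ
  set q := K * a 0 with hq
  have hq0 : 0 ≤ q := mul_nonneg hK.le (ha 0)
  rcases eq_or_lt_of_le hq0 with hq0' | hqpos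
  · -- degenerate case q = 0 : all aₙ = 0
    have hzero : ∀ n, a n = 0 := by
      intro n
      induction n with
      | zero =>
        have : K * a 0 = 0 := hq0'.symm
        nlinarith [ha 0]
      | succ n ih =>
        have h := hrec n
        rw [ih] at h
        have : K * 0 * ∑ i ∈ Finset.range (n + 1), a i = 0 := by ring
        rw [this] at h
        linarith [ha (n + 1)]
    intro n
    rw [hzero n, ← hq0', mul_zero,
      Real.zero_rpow (by positivity : (1:ℝ) + (n : ℝ) * δ ≠ 0)]
  · have hqδ : q ^ δ < 1 := Real.rpow_lt_one hq0 h1 hδ0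
    have hqδ0 : 0 < q ^ δ := Real.rpow_pos_of_pos hqpos δ
    have hden : 0 < 1 - q ^ δ := by linarith
    have h2' : q ^ ((1:ℝ) - δ) ≤ 1 - q ^ δ := (div_le_one hden).mp h2
    have hterm : ∀ i : ℕ, q ^ ((1:ℝ) + (i : ℝ) * δ) = q * (q ^ δ) ^ i := by
      intro i
      rw [Real.rpow_add hqpos, Real.rpow_one, mul_comm (i : ℝ) δ,
        Real.rpow_mul hq0, Real.rpow_natCast]
    suffices H : ∀ n, ∀ i ≤ n, K * a i ≤ q ^ ((1:ℝ) + (i : ℝ) * δ) by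
      intro n; exact H n n le_rfl
    intro n
    induction n with
    | zero =>
      intro i hi
      interval_cases i
      rw [show ((1:ℝ) + (0:ℕ) * δ) = 1 by push_cast; ring, Real.rpow_one]
    | succ n ih =>
      intro i hi
      rcases Nat.lt_succ_iff_lt_or_eq.mp (Nat.lt_succ_of_le hi) with h | h
      · exact ih i (Nat.lt_succ_iff.mp h)
      · subst h
        -- the sum bound
        have hsum : ∑ i ∈ Finset.range (n + 1), K * a i ≤ q / (1 - q ^ δ) := by
          have step1 : ∑ i ∈ Finset.range (n + 1), K * a i ≤
              ∑ i ∈ Finset.range (n + 1), q * (q ^ δ) ^ i := by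
            apply Finset.sum_le_sum
            intro i hi'
            rw [← hterm i]
            exact ih i (Nat.lt_succ_iff.mp (Finset.mem_range.mp hi'))
          have step2 : ∑ i ∈ Finset.range (n + 1), q * (q ^ δ) ^ i =
              q * ∑ i ∈ Finset.range (n + 1), (q ^ δ) ^ i := by
            rw [Finset.mul_sum]
          have hgeom : ∑ i ∈ Finset.range (n + 1), (q ^ δ) ^ i ≤ 1 / (1 - q ^ δ) := by
            rw [geom_sum_eq (ne_of_lt hqδ)]
            have heq : ((q ^ δ) ^ (n + 1) - 1) / (q ^ δ - 1) =
                (1 - (q ^ δ) ^ (n + 1)) / (1 - q ^ δ) := by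
              rw [← neg_div_neg_eq]; ring_nf
            rw [heq]
            have hr1 : 0 ≤ (q ^ δ) ^ (n + 1) := by positivity
            gcongr
            linarith
          calc ∑ i ∈ Finset.range (n + 1), K * a i
              ≤ q * ∑ i ∈ Finset.range (n + 1), (q ^ δ) ^ i := by
                rw [← step2]; exact step1
            _ ≤ q * (1 / (1 - q ^ δ)) := by
                exact mul_le_mul_of_nonneg_left hgeom hqpos.le
            _ = q / (1 - q ^ δ) := by ring
        have hq_split : q = q ^ δ * q ^ ((1:ℝ) - δ) := by
          rw [← Real.rpow_add hqpos]
          norm_num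
        have hfrac : q / (1 - q ^ δ) ≤ q ^ δ := by
          rw [div_le_iff₀ hden]
          calc q = q ^ δ * q ^ ((1:ℝ) - δ) := hq_split
            _ ≤ q ^ δ * (1 - q ^ δ) := by
                exact mul_le_mul_of_nonneg_left h2' hqδ0.le
        have hsum_nonneg : 0 ≤ ∑ i ∈ Finset.range (n + 1), a i :=
          Finset.sum_nonneg fun i _ => ha i
        have hIH := ih n le_rfl
        have key : K * a (n + 1) ≤ q ^ ((1:ℝ) + (n : ℝ) * δ) * (q / (1 - q ^ δ)) := by
          have h1' : K * a (n + 1) ≤ (K * a n) * (∑ i ∈ Finset.range (n + 1), K * a i) := by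
            have := hrec n
            have hmul : K * a (n + 1) ≤ K * (K * a n * ∑ i ∈ Finset.range (n + 1), a i) :=
              mul_le_mul_of_nonneg_left this hK.le
            calc K * a (n + 1) ≤ K * (K * a n * ∑ i ∈ Finset.range (n + 1), a i) := hmul
              _ = (K * a n) * (K * ∑ i ∈ Finset.range (n + 1), a i) := by ring
              _ = (K * a n) * (∑ i ∈ Finset.range (n + 1), K * a i) := by
                  rw [Finset.mul_sum]
          calc K * a (n + 1) ≤ (K * a n) * (∑ i ∈ Finset.range (n + 1), K * a i) := h1'
            _ ≤ q ^ ((1:ℝ) + (n : ℝ) * δ) * (q / (1 - q ^ δ)) := by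
                apply mul_le_mul hIH hsum
                · exact Finset.sum_nonneg fun i _ => mul_nonneg hK.le (ha i)
                · positivity
        calc K * a (n + 1) ≤ q ^ ((1:ℝ) + (n : ℝ) * δ) * (q / (1 - q ^ δ)) := key
          _ ≤ q ^ ((1:ℝ) + (n : ℝ) * δ) * q ^ δ := by
              exact mul_le_mul_of_nonneg_left hfrac (by positivity)
          _ = q ^ ((1:ℝ) + ((n : ℕ) + 1 : ℝ) * δ) := by
              rw [← Real.rpow_add hqpos]; ring_nf
          _ = q ^ ((1:ℝ) + ((n + 1 : ℕ) : ℝ) * δ) := by push_cast; ring_nf
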